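/- arXiv:2002.04753 — 2 statements merged into one kernel-verified Lean document; each statement's English description precedes it below -/
import Mathlib

section
/- Let F : ℝⁿ → ℝ be γ-strongly convex with minimizer w* and Hessian bounded above by LI. Suppose w⁺ = w − α Ĥ⁻¹∇F(w) where Ĥ is symmetric with (1−εΨ)γ I ⪯ Ĥ ⪯ (1+εΨ)L I, and the Armijo condition F(w⁺) ≤ F(w) + αβ pᵀ∇F(w) holds with p = −Ĥ⁻¹∇F(w), β ∈ (0,1). Then F(w⁺) − F(w*) ≤ (1 − ρ)(F(w) − F(w*)) where ρ = 2αβγ /((1+εΨ)L). -/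
open scoped InnerProductSpace

/-!
A Hessian lower bound `γ I ⪯ ∇²F` makes `t ↦ F (x + t • d) - γ t² ‖d‖² / 2` convex, so `F` lies
above its tangent paraboloids; minimising the paraboloid over `d` gives the gradient-dominance
bound `F w - F w* ≤ ‖∇F w‖² / (2γ)`. For a symmetric `0 ⪯ Ĥ ⪯ c I` one has
`‖Ĥ v‖² ≤ c ⟪Ĥ v, v⟫`, which at `v = p` says `c ⟪p, ∇F w⟫ ≤ -‖∇F w‖²`. Inserting both bounds
into the Armijo inequality gives the linear rate.
-/

section

variable {E : Type*} [NormedAddCommGroup E] [InnerProductSpace ℝ E]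

theorem LinearMap.IsSymmetric.sq_norm_apply_le {H : E →ₗ[ℝ] E} (hH : H.IsSymmetric) {c : ℝ}
    (hc : 0 < c) (hpos : ∀ v, 0 ≤ ⟪H v, v⟫_ℝ) (hle : ∀ v, ⟪H v, v⟫_ℝ ≤ c * ‖v‖ ^ 2) (v : E) :
    ‖H v‖ ^ 2 ≤ c * ⟪H v, v⟫_ℝ := by
  -- with `H ⪯ c` this leaves `0 ≤ c * (c * ⟪H v, v⟫ - ‖H v‖ ^ 2)`
  have hexpand : ⟪H (c • v - H v), c • v - H v⟫_ℝ
      = c ^ 2 * ⟪H v, v⟫_ℝ - 2 * c * ‖H v‖ ^ 2 + ⟪H (H v), H v⟫_ℝ := by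
    simp only [map_sub, map_smul, inner_sub_left, inner_sub_right, real_inner_smul_left,
      real_inner_smul_right, hH (H v) v, real_inner_self_eq_norm_sq]
    ring
  have := hpos (c • v - H v)
  nlinarith [hle (H v)]

variable [CompleteSpace E]

theorem ContDiff.differentiable_gradient {f : E → ℝ} (hf : ContDiff ℝ 2 f) :
    Differentiable ℝ (gradient f) :=
  (InnerProductSpace.toDual ℝ E).symm.toContinuousLinearEquiv.differentiable.comp
    ((hf.fderiv_right (m := 1) le_rfl).differentiable one_ne_zero)

theorem add_inner_gradient_add_sq_le_of_fderiv_gradient {f : E → ℝ} (hf : ContDiff ℝ 2 f)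
    {γ : ℝ} (hγ : ∀ x v, γ * ‖v‖ ^ 2 ≤ ⟪fderiv ℝ (gradient f) x v, v⟫_ℝ) (x d : E) :
    f x + ⟪gradient f x, d⟫_ℝ + γ / 2 * ‖d‖ ^ 2 ≤ f (x + d) := by
  have hline (t : ℝ) : HasDerivAt (fun t : ℝ => x + t • d) d t := by
    simpa using ((hasDerivAt_id t).smul_const d).const_add x
  have hf' (t : ℝ) : HasDerivAt (fun t => f (x + t • d)) ⟪gradient f (x + t • d), d⟫_ℝ t := by
    rw [inner_gradient_left]
    exact ((hf.differentiable (by norm_num)) _).hasFDerivAt.comp_hasDerivAt t (hline t)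
  have hf'' (t : ℝ) : HasDerivAt (fun t => ⟪gradient f (x + t • d), d⟫_ℝ)
      ⟪fderiv ℝ (gradient f) (x + t • d) d, d⟫_ℝ t := by
    simpa using ((hf.differentiable_gradient _).hasFDerivAt.comp_hasDerivAt t (hline t)).inner ℝ
      (hasDerivAt_const t d)
  set φ : ℝ → ℝ := fun t => f (x + t • d) - γ / 2 * ‖d‖ ^ 2 * t ^ 2
  have hφ' (t : ℝ) : HasDerivAt φ (⟪gradient f (x + t • d), d⟫_ℝ - γ * ‖d‖ ^ 2 * t) t :=
    ((hf' t).sub ((hasDerivAt_pow 2 t).const_mul (γ / 2 * ‖d‖ ^ 2))).congr_deriv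
      (by push_cast; ring)
  have hφ'' (t : ℝ) : HasDerivAt (fun t => ⟪gradient f (x + t • d), d⟫_ℝ - γ * ‖d‖ ^ 2 * t)
      (⟪fderiv ℝ (gradient f) (x + t • d) d, d⟫_ℝ - γ * ‖d‖ ^ 2) t :=
    ((hf'' t).sub ((hasDerivAt_id' t).const_mul (γ * ‖d‖ ^ 2))).congr_deriv (by ring)
  have hconvex : ConvexOn ℝ Set.univ φ :=
    convexOn_of_hasDerivWithinAt2_nonneg convex_univ
      (fun t _ => (hφ' t).continuousAt.continuousWithinAt)
      (fun t _ => (hφ' t).hasDerivWithinAt) (fun t _ => (hφ'' t).hasDerivWithinAt)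
      (fun t _ => sub_nonneg.mpr (hγ _ d))
  have := hconvex.le_slope_of_hasDerivAt (Set.mem_univ 0) (Set.mem_univ 1) zero_lt_one (hφ' 0)
  simp only [φ, slope_def_field, zero_smul, one_smul, add_zero, mul_zero, sub_zero, div_one,
    one_pow, mul_one, ne_eq, OfNat.ofNat_ne_zero, not_false_eq_true, zero_pow] at this
  linarith

theorem sub_le_sq_norm_gradient_div_of_fderiv_gradient {f : E → ℝ} (hf : ContDiff ℝ 2 f)
    {γ : ℝ} (hγ₀ : 0 < γ) (hγ : ∀ x v, γ * ‖v‖ ^ 2 ≤ ⟪fderiv ℝ (gradient f) x v, v⟫_ℝ)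
    (x y : E) : f x - f y ≤ ‖gradient f x‖ ^ 2 / (2 * γ) := by
  have hquad := add_inner_gradient_add_sq_le_of_fderiv_gradient hf hγ x (y - x)
  rw [add_sub_cancel] at hquad
  have hcs := neg_le_of_abs_le (abs_real_inner_le_norm (gradient f x) (y - x))
  rw [le_div_iff₀ (by positivity)]
  nlinarith [sq_nonneg (γ * ‖y - x‖ - ‖gradient f x‖)]

end

theorem global_linear_decrease_general
    {n : ℕ} (F : EuclideanSpace ℝ (Fin n) → ℝ) (hF : ContDiff ℝ 2 F)
    (γ L ε Ψ α β : ℝ) (hγ : 0 < γ) (hγL : γ ≤ L)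
    (hεΨ0 : 0 < ε * Ψ) (hεΨ1 : ε * Ψ < 1) (hα : 0 < α) (hβ0 : 0 < β)
    (hHessLow : ∀ x v : EuclideanSpace ℝ (Fin n),
      γ * ‖v‖ ^ 2 ≤ ⟪(fderiv ℝ (gradient F) x) v, v⟫_ℝ)
    (wstar : EuclideanSpace ℝ (Fin n))
    (Hhat : EuclideanSpace ℝ (Fin n) →L[ℝ] EuclideanSpace ℝ (Fin n))
    (hsym : ∀ u v, ⟪Hhat u, v⟫_ℝ = ⟪u, Hhat v⟫_ℝ)
    (hHlow : ∀ v, (1 - ε * Ψ) * γ * ‖v‖ ^ 2 ≤ ⟪Hhat v, v⟫_ℝ)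
    (hHupp : ∀ v, ⟪Hhat v, v⟫_ℝ ≤ (1 + ε * Ψ) * L * ‖v‖ ^ 2)
    (w p wplus : EuclideanSpace ℝ (Fin n))
    (hp : Hhat p = -gradient F w)
    (harmijo : F wplus ≤ F w + α * β * ⟪p, gradient F w⟫_ℝ) :
    F wplus - F wstar ≤ (1 - 2 * α * β * γ / ((1 + ε * Ψ) * L)) * (F w - F wstar) := by
  set c := (1 + ε * Ψ) * L
  have hc : 0 < c := mul_pos (by linarith) (hγ.trans_le hγL)
  have hpos (v : EuclideanSpace ℝ (Fin n)) : 0 ≤ ⟪Hhat v, v⟫_ℝ :=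
    (mul_nonneg (mul_nonneg (by linarith) hγ.le) (sq_nonneg _)).trans (hHlow v)
  have hdescent : ‖gradient F w‖ ^ 2 ≤ -(c * ⟪p, gradient F w⟫_ℝ) := by
    have := LinearMap.IsSymmetric.sq_norm_apply_le (H := Hhat.toLinearMap) hsym hc hpos hHupp p
    simpa [hp, inner_neg_left, real_inner_comm] using this
  have hgap := sub_le_sq_norm_gradient_div_of_fderiv_gradient hF hγ hHessLow w wstar
  have hslope : ⟪p, gradient F w⟫_ℝ ≤ -(2 * γ * (F w - F wstar)) / c := by
    rw [le_div_iff₀ hc]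
    rw [le_div_iff₀ (by positivity)] at hgap
    linarith
  calc F wplus - F wstar ≤ F w - F wstar + α * β * ⟪p, gradient F w⟫_ℝ := by linarith
    _ ≤ F w - F wstar + α * β * (-(2 * γ * (F w - F wstar)) / c) := by gcongr
    _ = (1 - 2 * α * β * γ / c) * (F w - F wstar) := by ring

/-- Global linear decrease: if `F` is `C²` with `γI ⪯ ∇²F ⪯ LI`, `w*` its minimizer,
`Ĥ` symmetric with `(1−εΨ)γ I ⪯ Ĥ ⪯ (1+εΨ)L I`, `p = −Ĥ⁻¹∇F(w)`, `w⁺ = w + αp`,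
and the Armijo condition holds, then
`F(w⁺) − F(w*) ≤ (1 − ρ)(F(w) − F(w*))` with `ρ = 2αβγ/((1+εΨ)L)`. -/
theorem global_linear_decrease
    {n : ℕ} (F : EuclideanSpace ℝ (Fin n) → ℝ) (hF : ContDiff ℝ 2 F)
    (γ L ε Ψ α β : ℝ) (hγ : 0 < γ) (hγL : γ ≤ L)
    (hεΨ0 : 0 < ε * Ψ) (hεΨ1 : ε * Ψ < 1) (hα : 0 < α) (hβ0 : 0 < β) (hβ1 : β < 1)
    (hHessLow : ∀ x v : EuclideanSpace ℝ (Fin n),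
      γ * ‖v‖ ^ 2 ≤ ⟪(fderiv ℝ (gradient F) x) v, v⟫_ℝ)
    (hHessUpp : ∀ x v : EuclideanSpace ℝ (Fin n),
      ⟪(fderiv ℝ (gradient F) x) v, v⟫_ℝ ≤ L * ‖v‖ ^ 2)
    (wstar : EuclideanSpace ℝ (Fin n)) (hmin : ∀ v, F wstar ≤ F v)
    (Hhat : EuclideanSpace ℝ (Fin n) →L[ℝ] EuclideanSpace ℝ (Fin n))
    (hsym : ∀ u v, ⟪Hhat u, v⟫_ℝ = ⟪u, Hhat v⟫_ℝ)
    (hHlow : ∀ v, (1 - ε * Ψ) * γ * ‖v‖ ^ 2 ≤ ⟪Hhat v, v⟫_ℝ)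
    (hHupp : ∀ v, ⟪Hhat v, v⟫_ℝ ≤ (1 + ε * Ψ) * L * ‖v‖ ^ 2)
    (w p wplus : EuclideanSpace ℝ (Fin n))
    (hp : Hhat p = -gradient F w) (hwplus : wplus = w + α • p)
    (harmijo : F wplus ≤ F w + α * β * ⟪p, gradient F w⟫_ℝ) :
    F wplus - F wstar ≤ (1 - 2 * α * β * γ / ((1 + ε * Ψ) * L)) * (F w - F wstar) :=
  global_linear_decrease_general F hF γ L ε Ψ α β hγ hγL hεΨ0 hεΨ1 hα hβ0 hHessLow wstar Hhat hsym
    hHlow hHupp w p wplus hp harmijo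
end

section
/- Suppose a sequence (w_t) in ℝⁿ satisfies ‖w_{t+1} − w*‖ ≤ ν_t‖w_t − w*‖ + η‖w_t − w*‖² with ν_t = ρ^{t+1}ε' for constants ρ ∈ (0,1), ε' > 0 with ρε' < ρ, and η > 0. If ‖w_0 − w*‖ ≤ (ρ − ρε')/η, then ‖w_t − w*‖ ≤ ρᵗ‖w_{t−1} − w*‖ for all t ≥ 1 (superlinear decay of contraction factors). -/
/-- Local superlinear convergence: if `‖w_{t+1} − w*‖ ≤ ν_t‖w_t − w*‖ + η‖w_t − w*‖²`
with geometrically decreasing `ν_t = ρ^{t+1} ε'`, `ρ ∈ (0,1)`, `0 < ε' < 1`, `η > 0`,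
and `‖w_0 − w*‖ ≤ (ρ − ρε')/η`, then `‖w_t − w*‖ ≤ ρᵗ‖w_{t−1} − w*‖` for all `t ≥ 1`. -/
theorem local_superlinear_convergence
    {n : ℕ} (wstar : EuclideanSpace ℝ (Fin n)) (w : ℕ → EuclideanSpace ℝ (Fin n))
    (ρ ε' η : ℝ) (hρ0 : 0 < ρ) (hρ1 : ρ < 1) (hε' : 0 < ε')
    (hερ : ε' * ρ < ρ) (hη : 0 < η)
    (hrec : ∀ t : ℕ, ‖w (t + 1) - wstar‖ ≤
      ρ ^ (t + 1) * ε' * ‖w t - wstar‖ + η * ‖w t - wstar‖ ^ 2)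
    (hinit : ‖w 0 - wstar‖ ≤ (ρ - ρ * ε') / η) :
    ∀ t : ℕ, 1 ≤ t → ‖w t - wstar‖ ≤ ρ ^ t * ‖w (t - 1) - wstar‖ := by
  have hε1 : ε' < 1 := by nlinarith
  -- invariant
  have key : ∀ t : ℕ, ‖w t - wstar‖ ≤ ρ ^ (t + 1) * (1 - ε') / η := by
    intro t
    induction t with
    | zero =>
      have : (ρ - ρ * ε') / η = ρ ^ (0 + 1) * (1 - ε') / η := by ring
      linarith [hinit, this ▸ hinit]
    | succ t ih =>
      have hd : 0 ≤ ‖w t - wstar‖ := norm_nonneg _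
      have hpow : 0 < ρ ^ (t + 1) := pow_pos hρ0 _
      have hηd : η * ‖w t - wstar‖ ≤ ρ ^ (t + 1) * (1 - ε') := by
        have := mul_le_mul_of_nonneg_left ih (le_of_lt hη)
        calc η * ‖w t - wstar‖ ≤ η * (ρ ^ (t + 1) * (1 - ε') / η) := this
          _ = ρ ^ (t + 1) * (1 - ε') := by field_simp
      have hstep : ‖w (t + 1) - wstar‖ ≤ ρ ^ (t + 1) * ‖w t - wstar‖ := by
        have := hrec t
        nlinarith [sq_nonneg (‖w t - wstar‖)]
      have hle : ρ ^ (t + 1) ≤ ρ := by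
        have := pow_le_pow_of_le_one (le_of_lt hρ0) (le_of_lt hρ1) (show 1 ≤ t+1 by omega)
        simpa using this
      calc ‖w (t + 1) - wstar‖ ≤ ρ ^ (t + 1) * ‖w t - wstar‖ := hstep
        _ ≤ ρ ^ (t + 1) * (ρ ^ (t + 1) * (1 - ε') / η) :=
            mul_le_mul_of_nonneg_left ih (le_of_lt hpow)
        _ ≤ ρ * (ρ ^ (t + 1) * (1 - ε') / η) := by
            apply mul_le_mul_of_nonneg_right hle
            have h1 : (0:ℝ) ≤ 1 - ε' := by linarith
            positivity
        _ = ρ ^ (t + 1 + 1) * (1 - ε') / η := by ring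
  intro t ht
  obtain ⟨s, rfl⟩ : ∃ s, t = s + 1 := ⟨t - 1, by omega⟩
  have hd : 0 ≤ ‖w s - wstar‖ := norm_nonneg _
  have hηd : η * ‖w s - wstar‖ ≤ ρ ^ (s + 1) * (1 - ε') := by
    have := mul_le_mul_of_nonneg_left (key s) (le_of_lt hη)
    calc η * ‖w s - wstar‖ ≤ η * (ρ ^ (s + 1) * (1 - ε') / η) := this
      _ = ρ ^ (s + 1) * (1 - ε') := by field_simp
  have := hrec s
  simp only [Nat.add_sub_cancel]
  nlinarith [sq_nonneg (‖w s - wstar‖)]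
end
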